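/- arXiv:2509.13231 — 3 statements merged into one kernel-verified Lean document; each statement's English description precedes it below -/
import Mathlib

section
/- Let 𝔪 be a nonempty symmetric multisegment in the bad-parity setting with initial sequence Δ₁ ≥ … ≥ Δ_l, and assume there exist i, j ∈ {1,…,l} with Δ_i∨ = Δ_j. Set i₀ = min{i ∈ {1,…,l} : ∃ j ∈ {1,…,l}, Δ_i∨ = Δ_j} and j₀ = max{j ∈ {1,…,l} : ∃ i ∈ {1,…,l}, Δ_j∨ = Δ_i}. Then: (1) Δ_{i₀}∨ = Δ_{j₀}; (2) for i, j ∈ {1,…,l}, Δ_i∨ = Δ_j if and only if i₀ ≤ i ≤ j₀ and i + j = i₀ + j₀; (3) for all i with i₀ ≤ i ≤ j₀, ℓ(Δ_i) = ℓ(Δ_{i₀}). -/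
/-!
In doubled coordinates the ends of an initial sequence drop by exactly `2` at each step, and the
beginnings, which all have the parity of the ends, drop by at least `2`. If `Δ i∨ = Δ j` with
`i ≤ j`, then `e(Δ j) = -b(Δ i)` and `b(Δ j) = -e(Δ i)` force every beginning between `i` and `j`
to drop by exactly `2` as well, so `Δ i, …, Δ j` are translates of one segment, symmetric about
the middle. Duality reverses the order of the indices of dual pairs, so the first index `i₀`
with a dual partner is paired with the last such index `j₀`, and all dual pairs lie in this block.
-/

namespace AZ

/-- A segment in doubled coordinates: the pair `(a, b)` represents the segment
`[a/2, b/2]` whose endpoints lie in `(1/2)ℤ`.  Thus the end `e(Δ)` is `Δ.2 / 2`,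
the beginning `b(Δ)` is `Δ.1 / 2`, and `Δ` is centered iff `Δ.1 + Δ.2 = 0`. -/
abbrev Seg := ℤ × ℤ

namespace Seg

/-- Well-formedness of a segment: `a ≤ b` and `a ≡ b [ZMOD 2]`, i.e. `b - a ∈ 2ℕ`. -/
def WF (Δ : Seg) : Prop := Δ.1 ≤ Δ.2 ∧ Δ.1 % 2 = Δ.2 % 2

/-- The dual (contragredient) segment `Δ∨ = [−b, −a]`. -/
def dual (Δ : Seg) : Seg := (-Δ.2, -Δ.1)

/-- `Δ⁻` : the segment with its end removed. -/
def trimEnd (Δ : Seg) : Seg := (Δ.1, Δ.2 - 2)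

/-- `⁻Δ` : the segment with its beginning removed. -/
def trimBeg (Δ : Seg) : Seg := (Δ.1 + 2, Δ.2)

/-- `⁺Δ` : the segment with its beginning extended. -/
def extBeg (Δ : Seg) : Seg := (Δ.1 - 2, Δ.2)

/-- The order on segments: `[x₁,y₁] ≤ [x₂,y₂]` iff `x₁ < x₂`, or `x₁ = x₂` and `y₁ ≥ y₂`. -/
def le (Δ₁ Δ₂ : Seg) : Prop := Δ₁.1 < Δ₂.1 ∨ (Δ₁.1 = Δ₂.1 ∧ Δ₂.2 ≤ Δ₁.2)

end Seg

/-- The condition for `next` to be a successor of `Δ j` in the bad-parity initial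
sequence: `next ∈ m`, `next ≤ Δ j`, `e(next) = e(Δ j) − 1`, and if the dual of `next`
already occurs among `Δ 1, …, Δ j`, then `next` has multiplicity at least `2` in `m`. -/
def SuccBad (m : Multiset Seg) (Δ : ℕ → Seg) (j : ℕ) (next : Seg) : Prop :=
  next ∈ m ∧ Seg.le next (Δ j) ∧ next.2 = (Δ j).2 - 2 ∧
    ((∃ i, 1 ≤ i ∧ i ≤ j ∧ Seg.dual next = Δ i) → 2 ≤ m.count next)

/-- `Δ 1, …, Δ l` is the initial sequence in the bad-parity algorithm for `m`. -/
structure IsInitSeqBad (m : Multiset Seg) (Δ : ℕ → Seg) (l : ℕ) : Prop where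
  one_le : 1 ≤ l
  first_mem : Δ 1 ∈ m
  first_max_end : ∀ Λ ∈ m, Λ.2 ≤ (Δ 1).2
  first_max : ∀ Λ ∈ m, Λ.2 = (Δ 1).2 → Seg.le Λ (Δ 1)
  succ : ∀ j, 1 ≤ j → j < l → SuccBad m Δ j (Δ (j + 1))
  succ_max : ∀ j, 1 ≤ j → j < l → ∀ Λ, SuccBad m Δ j Λ → Seg.le Λ (Δ (j + 1))
  last : ∀ Λ, ¬ SuccBad m Δ l Λ

/-- The multisegment `𝔪₁ = [e(Δ_l), e(Δ₁)] + [−e(Δ₁), −e(Δ_l)]`. -/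
def mOneBad (Δ : ℕ → Seg) (l : ℕ) : Multiset Seg :=
  {((Δ l).2, (Δ 1).2), (-(Δ 1).2, -(Δ l).2)}

/-- The multiset of segments of an initial sequence. -/
def seqM (Δ : ℕ → Seg) (l : ℕ) : Multiset Seg := (Finset.Icc 1 l).val.map Δ

/-- The multisegment `𝔪#` : remove one copy of each `Δ i` and each `Δ i∨`, insert
`Δ i⁻` and `⁻(Δ i∨)` and discard empty segments. -/
def mHashBad (m : Multiset Seg) (Δ : ℕ → Seg) (l : ℕ) : Multiset Seg :=
  (m - (seqM Δ l + (seqM Δ l).map Seg.dual)) +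
    ((seqM Δ l).map Seg.trimEnd +
        (seqM Δ l).map (fun Δ0 => Seg.dual (Seg.trimEnd Δ0))).filter
      fun Δ0 => Δ0.1 ≤ Δ0.2

/-- The bad-parity duality algorithm `AD`, as a relation: `AD(0) = 0` and
`AD(𝔪) = 𝔪₁ + AD(𝔪#)`. -/
inductive IsADBad : Multiset Seg → Multiset Seg → Prop
  | zero : IsADBad 0 0
  | step {m : Multiset Seg} {Δ : ℕ → Seg} {l : ℕ} {d : Multiset Seg}
      (hm : m ≠ 0) (hseq : IsInitSeqBad m Δ l) (hrec : IsADBad (mHashBad m Δ l) d) :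
      IsADBad m (mOneBad Δ l + d)

/-- A valid symmetric multisegment in the bad-parity setting: every centered segment
has even multiplicity. -/
structure BadInput (m : Multiset Seg) : Prop where
  wf : ∀ Δ0 ∈ m, Seg.WF Δ0
  symm : m.map Seg.dual = m
  parity : ∀ Δ₁ ∈ m, ∀ Δ₂ ∈ m, Δ₁.2 % 2 = Δ₂.2 % 2
  evenCentered : ∀ Δ0 : Seg, Δ0.1 + Δ0.2 = 0 → Even (m.count Δ0)

/-- Index `i ∈ {1, …, l}` whose segment's dual also occurs in the initial sequence. -/
def HasDualPair (Δ : ℕ → Seg) (l i : ℕ) : Prop :=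
  1 ≤ i ∧ i ≤ l ∧ ∃ j, 1 ≤ j ∧ j ≤ l ∧ Seg.dual (Δ i) = Δ j

/-- `i₀ = min{i ∈ {1,…,l} : ∃ j ∈ {1,…,l}, Δ i∨ = Δ j}`. -/
def IsMinDual (Δ : ℕ → Seg) (l i₀ : ℕ) : Prop :=
  HasDualPair Δ l i₀ ∧ ∀ i, HasDualPair Δ l i → i₀ ≤ i

/-- `j₀ = max{j ∈ {1,…,l} : ∃ i ∈ {1,…,l}, Δ j∨ = Δ i}`. -/
def IsMaxDual (Δ : ℕ → Seg) (l j₀ : ℕ) : Prop :=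
  HasDualPair Δ l j₀ ∧ ∀ j, HasDualPair Δ l j → j ≤ j₀

namespace Seg

@[simp]
lemma dual_dual (Δ : Seg) : dual (dual Δ) = Δ := by
  simp [dual]

lemma dual_eq_iff {Δ Δ' : Seg} : dual Δ = Δ' ↔ Δ'.1 = -Δ.2 ∧ Δ'.2 = -Δ.1 := by
  rw [dual, Prod.ext_iff]
  exact ⟨fun ⟨h₁, h₂⟩ => ⟨h₁.symm, h₂.symm⟩, fun ⟨h₁, h₂⟩ => ⟨h₁.symm, h₂.symm⟩⟩

end Seg

structure IsStaircase (Δ : ℕ → Seg) (l : ℕ) : Prop where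
  end_succ : ∀ k, 1 ≤ k → k < l → (Δ (k + 1)).2 = (Δ k).2 - 2
  beg_succ_le : ∀ k, 1 ≤ k → k < l → (Δ (k + 1)).1 ≤ (Δ k).1 - 2

namespace IsInitSeqBad

variable {m : Multiset Seg} {Δ : ℕ → Seg} {l : ℕ}

lemma mem (hseq : IsInitSeqBad m Δ l) {k : ℕ} (hk : 1 ≤ k) (hkl : k ≤ l) : Δ k ∈ m := by
  obtain ⟨k, rfl⟩ := Nat.exists_eq_add_of_le' hk
  rcases k with _ | k
  · exact hseq.first_mem
  · exact (hseq.succ (k + 1) (by omega) (by omega)).1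

lemma beg_emod_two (hbad : BadInput m) (hseq : IsInitSeqBad m Δ l) {k : ℕ} (hk : 1 ≤ k)
    (hkl : k ≤ l) : (Δ k).1 % 2 = (Δ 1).2 % 2 := by
  have hmem := hseq.mem hk hkl
  have := (hbad.wf _ hmem).2
  have := hbad.parity _ hmem _ hseq.first_mem
  omega

lemma isStaircase (hbad : BadInput m) (hseq : IsInitSeqBad m Δ l) : IsStaircase Δ l where
  end_succ k hk hkl := (hseq.succ k hk hkl).2.2.1
  beg_succ_le k hk hkl := by
    obtain ⟨-, hle, hend, -⟩ := hseq.succ k hk hkl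
    have := hseq.beg_emod_two hbad hk hkl.le
    have := hseq.beg_emod_two hbad (k := k + 1) (by omega) hkl
    rcases hle with hlt | ⟨-, hge⟩ <;> omega

end IsInitSeqBad

lemma hasDualPair_of_dual_eq {Δ : ℕ → Seg} {l i j : ℕ} (hi : 1 ≤ i) (hil : i ≤ l) (hj : 1 ≤ j)
    (hjl : j ≤ l) (hd : Seg.dual (Δ i) = Δ j) : HasDualPair Δ l i ∧ HasDualPair Δ l j :=
  ⟨⟨hi, hil, j, hj, hjl, hd⟩, ⟨hj, hjl, i, hi, hil, by rw [← hd, Seg.dual_dual]⟩⟩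

namespace IsStaircase

variable {Δ : ℕ → Seg} {l : ℕ}

lemma end_eq (h : IsStaircase Δ l) {i j : ℕ} (hi : 1 ≤ i) (hij : i ≤ j) (hj : j ≤ l) :
    (Δ j).2 = (Δ i).2 - 2 * ((j : ℤ) - i) := by
  induction j, hij using Nat.le_induction with
  | base => simp
  | succ k hik ih =>
    rw [h.end_succ k (by omega) (by omega), ih (by omega)]
    push_cast
    ring

lemma beg_le (h : IsStaircase Δ l) {i j : ℕ} (hi : 1 ≤ i) (hij : i ≤ j) (hj : j ≤ l) :
    (Δ j).1 ≤ (Δ i).1 - 2 * ((j : ℤ) - i) := by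
  induction j, hij using Nat.le_induction with
  | base => simp
  | succ k hik ih =>
    have := h.beg_succ_le k (by omega) (by omega)
    have := ih (by omega)
    push_cast
    omega

lemma eq_translate_of_dual_eq (h : IsStaircase Δ l) {i j : ℕ} (hi : 1 ≤ i) (hij : i ≤ j)
    (hj : j ≤ l) (hd : Seg.dual (Δ i) = Δ j) {k : ℕ} (hik : i ≤ k) (hkj : k ≤ j) :
    Δ k = ((Δ i).1 - 2 * ((k : ℤ) - i), (Δ i).2 - 2 * ((k : ℤ) - i)) := by
  have := Seg.dual_eq_iff.1 hd
  have := h.end_eq hi hij hj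
  have := h.end_eq hi hik (hkj.trans hj)
  have := h.beg_le hi hik (hkj.trans hj)
  have := h.beg_le (hi.trans hik) hkj hj
  ext <;> simp only <;> omega

lemma dual_eq_of_add_eq (h : IsStaircase Δ l) {i j : ℕ} (hi : 1 ≤ i) (hij : i ≤ j)
    (hj : j ≤ l) (hd : Seg.dual (Δ i) = Δ j) {k k' : ℕ} (hik : i ≤ k) (hkj : k ≤ j)
    (hkk' : k + k' = i + j) : Seg.dual (Δ k) = Δ k' := by
  have := Seg.dual_eq_iff.1 hd
  have hk := h.eq_translate_of_dual_eq hi hij hj hd hik hkj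
  have hk' := h.eq_translate_of_dual_eq hi hij hj hd (k := k') (by omega) (by omega)
  have hj' := h.eq_translate_of_dual_eq hi hij hj hd hij le_rfl
  rw [hk, hk', Seg.dual_eq_iff]
  rw [hj'] at this
  simp only at this ⊢
  omega

lemma add_eq_of_dual_eq (h : IsStaircase Δ l) {i j : ℕ} (hi : 1 ≤ i) (hij : i ≤ j)
    (hj : j ≤ l) (hd : Seg.dual (Δ i) = Δ j) {k k' : ℕ} (hik : i ≤ k) (hkj : k ≤ j)
    (hik' : i ≤ k') (hk'j : k' ≤ j) (hdk : Seg.dual (Δ k) = Δ k') : k + k' = i + j := by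
  have hij' := Seg.dual_eq_iff.1 hd
  have hkk' := Seg.dual_eq_iff.1 hdk
  rw [h.eq_translate_of_dual_eq hi hij hj hd hij le_rfl] at hij'
  rw [h.eq_translate_of_dual_eq hi hij hj hd hik hkj,
    h.eq_translate_of_dual_eq hi hij hj hd hik' hk'j] at hkk'
  simp only at hij' hkk'
  omega

lemma partner_lt_of_lt (h : IsStaircase Δ l) {i j i' j' : ℕ} (hi : 1 ≤ i) (hj : 1 ≤ j)
    (hjl : j ≤ l) (hi'l : i' ≤ l) (hj' : 1 ≤ j') (hj'l : j' ≤ l)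
    (hd : Seg.dual (Δ i) = Δ j) (hd' : Seg.dual (Δ i') = Δ j') (hii' : i < i') : j' < j := by
  have := (Seg.dual_eq_iff.1 hd).2
  have := (Seg.dual_eq_iff.1 hd').2
  have := h.beg_le hi hii'.le hi'l
  have := h.end_eq le_rfl hj hjl
  have := h.end_eq le_rfl hj' hj'l
  omega

lemma dual_eq_of_isMinDual_of_isMaxDual (h : IsStaircase Δ l) {i₀ j₀ : ℕ}
    (hi₀ : IsMinDual Δ l i₀) (hj₀ : IsMaxDual Δ l j₀) : Seg.dual (Δ i₀) = Δ j₀ := by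
  obtain ⟨⟨hi₀1, hi₀l, p, hp1, hpl, hdp⟩, hmin⟩ := hi₀
  obtain ⟨⟨hj₀1, hj₀l, i₁, hi₁1, hi₁l, hdj⟩, hmax⟩ := hj₀
  have hdi₁ : Seg.dual (Δ i₁) = Δ j₀ := by rw [← hdj, Seg.dual_dual]
  have hi₀i₁ : i₀ ≤ i₁ := hmin i₁ (hasDualPair_of_dual_eq hi₁1 hi₁l hj₀1 hj₀l hdi₁).1
  have hpj₀ : p ≤ j₀ := hmax p (hasDualPair_of_dual_eq hi₀1 hi₀l hp1 hpl hdp).2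
  obtain rfl : i₀ = i₁ := by
    by_contra hne
    have := h.partner_lt_of_lt hi₀1 hp1 hpl hi₁l hj₀1 hj₀l hdp hdi₁ (by omega)
    omega
  exact hdi₁

end IsStaircase

theorem stmt7_general (m : Multiset Seg) (hbad : BadInput m)
    (Δ : ℕ → Seg) (l : ℕ) (hseq : IsInitSeqBad m Δ l)
    (i₀ j₀ : ℕ) (hi₀ : IsMinDual Δ l i₀) (hj₀ : IsMaxDual Δ l j₀) :
    Seg.dual (Δ i₀) = Δ j₀ ∧
      (∀ i j, 1 ≤ i → i ≤ l → 1 ≤ j → j ≤ l →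
        (Seg.dual (Δ i) = Δ j ↔ i₀ ≤ i ∧ i ≤ j₀ ∧ i + j = i₀ + j₀)) ∧
      (∀ i, i₀ ≤ i → i ≤ j₀ → (Δ i).2 - (Δ i).1 = (Δ i₀).2 - (Δ i₀).1) := by
  have hstair := hseq.isStaircase hbad
  have hd₀ := hstair.dual_eq_of_isMinDual_of_isMaxDual hi₀ hj₀
  obtain ⟨⟨hi₀1, hi₀l, -⟩, hmin⟩ := hi₀
  obtain ⟨⟨hj₀1, hj₀l, -⟩, hmax⟩ := hj₀
  have hi₀j₀ : i₀ ≤ j₀ := hmax i₀ (hasDualPair_of_dual_eq hi₀1 hi₀l hj₀1 hj₀l hd₀).1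
  refine ⟨hd₀, fun i j hi hil hj hjl => ⟨fun hd => ?_, fun ⟨hi₀i, hij₀, hsum⟩ => ?_⟩,
    fun i hi₀i hij₀ => ?_⟩
  · obtain ⟨hpi, hpj⟩ := hasDualPair_of_dual_eq hi hil hj hjl hd
    have hi₀i := hmin i hpi
    have hij₀ := hmax i hpi
    exact ⟨hi₀i, hij₀, hstair.add_eq_of_dual_eq hi₀1 hi₀j₀ hj₀l hd₀ hi₀i hij₀
      (hmin j hpj) (hmax j hpj) hd⟩
  · exact hstair.dual_eq_of_add_eq hi₀1 hi₀j₀ hj₀l hd₀ hi₀i hij₀ hsum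
  · rw [hstair.eq_translate_of_dual_eq hi₀1 hi₀j₀ hj₀l hd₀ hi₀i hij₀]
    ring

/-- Lemma 7.1.2: properties of the set of dual pairs in the
bad-parity initial sequence. -/
theorem stmt7 (m : Multiset Seg) (hbad : BadInput m) (hne : m ≠ 0)
    (Δ : ℕ → Seg) (l : ℕ) (hseq : IsInitSeqBad m Δ l)
    (i₀ j₀ : ℕ) (hi₀ : IsMinDual Δ l i₀) (hj₀ : IsMaxDual Δ l j₀) :
    Seg.dual (Δ i₀) = Δ j₀ ∧
      (∀ i j, 1 ≤ i → i ≤ l → 1 ≤ j → j ≤ l →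
        (Seg.dual (Δ i) = Δ j ↔ i₀ ≤ i ∧ i ≤ j₀ ∧ i + j = i₀ + j₀)) ∧
      (∀ i, i₀ ≤ i → i ≤ j₀ → (Δ i).2 - (Δ i).1 = (Δ i₀).2 - (Δ i₀).1) :=
  stmt7_general m hbad Δ l hseq i₀ j₀ hi₀ hj₀

end AZ
end

section
/- Work in the bad-parity setting, half-integer case. Let c, n ∈ ℕ with c even, and let 𝔪 = c·[−1/2,1/2] + n·([−1/2,−1/2] + [1/2,1/2]). Then AD(𝔪) = c'·[−1/2,1/2] + n'·([−1/2,−1/2] + [1/2,1/2]), where: (1) if n is even, then c' = n and n' = c; (2) if n is odd, then c' = n − 1 and n' = c + 1. -/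
/-!
Write `𝔪(c, n) = c·[−1/2,1/2] + n·([−1/2,−1/2] + [1/2,1/2])`. Each step of the algorithm is
forced. For `n ≥ 2` the initial sequence is `[1/2,1/2], [−1/2,−1/2]`: it contributes
`2·[−1/2,1/2]` and leaves `𝔪(c, n − 2)`. For `n = 1` it is `[1/2,1/2]` alone, because
`[−1/2,−1/2]` is dual to it and occurs only once: it contributes `[−1/2,−1/2] + [1/2,1/2]` and
leaves `𝔪(c, 0)`. For `n = 0` it is `[−1/2,1/2]`, which contributes `[−1/2,−1/2] + [1/2,1/2]`
and, being centered, is removed twice and replaced by `[−1/2,−1/2]` and `[1/2,1/2]`, leaving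
`𝔪(c − 2, 1)`. Iterating, `AD(𝔪(c, n)) = 𝔪(2⌊n/2⌋, c + n mod 2)` for even `c`.
-/

namespace AZ

def segCen : Seg := (-1, 1)

def segNeg : Seg := (-1, -1)

def segPos : Seg := (1, 1)

/-- `𝔪(c, n)`; in the doubled coordinates of `Seg`, `segCen`, `segNeg`, `segPos` are
`[−1/2,1/2]`, `[−1/2,−1/2]`, `[1/2,1/2]`. -/
def halfMulti (c n : ℕ) : Multiset Seg :=
  Multiset.replicate c segCen + Multiset.replicate n segNeg + Multiset.replicate n segPos

theorem halfMulti_add (c n c' n' : ℕ) :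
    halfMulti c n + halfMulti c' n' = halfMulti (c + c') (n + n') := by
  simp only [halfMulti, Multiset.replicate_add]
  abel

theorem halfMulti_add_sub (c n c' n' : ℕ) :
    halfMulti (c + c') (n + n') - halfMulti c' n' = halfMulti c n := by
  rw [← halfMulti_add, add_tsub_cancel_right]

theorem mem_halfMulti {c n : ℕ} {Λ : Seg} :
    Λ ∈ halfMulti c n ↔ (c ≠ 0 ∧ Λ = segCen) ∨ (n ≠ 0 ∧ Λ = segNeg) ∨ (n ≠ 0 ∧ Λ = segPos) := by
  simp only [halfMulti, Multiset.mem_add, Multiset.mem_replicate]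
  tauto

theorem count_segNeg_halfMulti (c n : ℕ) : (halfMulti c n).count segNeg = n := by
  simp [halfMulti, Multiset.count_replicate, segNeg, segCen, segPos]

theorem halfMulti_ne_zero {c n : ℕ} (h : c ≠ 0 ∨ n ≠ 0) : halfMulti c n ≠ 0 := by
  intro h0
  have := congrArg Multiset.card h0
  simp only [halfMulti, Multiset.card_add, Multiset.card_replicate, Multiset.card_zero] at this
  omega

theorem seqM_one (Δ : ℕ → Seg) : seqM Δ 1 = {Δ 1} := rfl

theorem seqM_two (Δ : ℕ → Seg) : seqM Δ 2 = {Δ 1, Δ 2} := rfl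

theorem IsADBad.eq_zero_of_zero {d : Multiset Seg} (h : IsADBad 0 d) : d = 0 := by
  cases h with
  | zero => rfl
  | step hm => exact absurd rfl hm

theorem IsADBad.exists_of_ne_zero {m d : Multiset Seg} (h : IsADBad m d) (hm : m ≠ 0) :
    ∃ Δ l d', IsInitSeqBad m Δ l ∧ IsADBad (mHashBad m Δ l) d' ∧ d = mOneBad Δ l + d' := by
  cases h with
  | zero => exact absurd rfl hm
  | step _ hseq hrec => exact ⟨_, _, _, hseq, hrec, rfl⟩

namespace IsInitSeqBad

variable {m : Multiset Seg} {Δ : ℕ → Seg} {l j : ℕ}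

theorem lt_of_succBad (hseq : IsInitSeqBad m Δ l) (hjl : j ≤ l) {Λ : Seg}
    (h : SuccBad m Δ j Λ) : j < l :=
  lt_of_le_of_ne hjl fun hj => hseq.last Λ (hj ▸ h)

theorem le_of_forall_not_succBad (hseq : IsInitSeqBad m Δ l) (hj : 1 ≤ j)
    (h : ∀ Λ, ¬ SuccBad m Δ j Λ) : l ≤ j := by
  by_contra! hlt
  exact h _ (hseq.succ j hj hlt)

end IsInitSeqBad

section halfMulti

variable {c n j : ℕ} {Δ : ℕ → Seg} {l : ℕ}

theorem eq_segNeg_of_succBad {Λ : Seg} (h : SuccBad (halfMulti c n) Δ j Λ) (hj : (Δ j).2 = 1) :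
    Λ = segNeg := by
  obtain ⟨hmem, -, hend, -⟩ := h
  rcases mem_halfMulti.mp hmem with ⟨-, rfl⟩ | ⟨-, rfl⟩ | ⟨-, rfl⟩ <;>
    simp_all [segCen, segNeg, segPos]

theorem not_succBad_of_eq_segNeg (hj : Δ j = segNeg) (Λ : Seg) :
    ¬ SuccBad (halfMulti c n) Δ j Λ := by
  rintro ⟨hmem, -, hend, -⟩
  rcases mem_halfMulti.mp hmem with ⟨-, rfl⟩ | ⟨-, rfl⟩ | ⟨-, rfl⟩ <;>
    simp_all [segCen, segNeg, segPos]

theorem IsInitSeqBad.first_eq_segPos (hseq : IsInitSeqBad (halfMulti c n) Δ l) (hn : n ≠ 0) :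
    Δ 1 = segPos := by
  have hpos : segPos ∈ halfMulti c n := mem_halfMulti.mpr (Or.inr (Or.inr ⟨hn, rfl⟩))
  rcases mem_halfMulti.mp hseq.first_mem with ⟨-, h⟩ | ⟨-, h⟩ | ⟨-, h⟩
  · have := hseq.first_max segPos hpos (by rw [h]; rfl)
    simp [h, Seg.le, segCen, segPos] at this
  · have := hseq.first_max_end segPos hpos
    simp [h, segNeg, segPos] at this
  · exact h

theorem IsInitSeqBad.first_eq_segCen (hseq : IsInitSeqBad (halfMulti c 0) Δ l) :
    Δ 1 = segCen := by
  rcases mem_halfMulti.mp hseq.first_mem with ⟨-, h⟩ | ⟨h, -⟩ | ⟨h, -⟩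
  · exact h
  all_goals exact absurd rfl h

theorem IsInitSeqBad.halfMulti_add_two (hseq : IsInitSeqBad (halfMulti c (n + 2)) Δ l) :
    l = 2 ∧ Δ 1 = segPos ∧ Δ 2 = segNeg := by
  have h1 := hseq.first_eq_segPos (by omega)
  have hsucc : SuccBad (halfMulti c (n + 2)) Δ 1 segNeg := by
    refine ⟨mem_halfMulti.mpr (Or.inr (Or.inl ⟨by omega, rfl⟩)), ?_, ?_, fun _ => ?_⟩
    · simp [h1, Seg.le, segNeg, segPos]
    · simp [h1, segNeg, segPos]
    · rw [count_segNeg_halfMulti]; omega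
  have hl := hseq.lt_of_succBad hseq.one_le hsucc
  have h2 := eq_segNeg_of_succBad (hseq.succ 1 le_rfl hl) (by rw [h1]; rfl)
  have := hseq.le_of_forall_not_succBad one_le_two (not_succBad_of_eq_segNeg h2)
  exact ⟨by omega, h1, h2⟩

theorem IsInitSeqBad.halfMulti_one (hseq : IsInitSeqBad (halfMulti c 1) Δ l) :
    l = 1 ∧ Δ 1 = segPos := by
  have h1 := hseq.first_eq_segPos one_ne_zero
  refine ⟨le_antisymm (hseq.le_of_forall_not_succBad le_rfl fun Λ h => ?_) hseq.one_le, h1⟩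
  obtain rfl := eq_segNeg_of_succBad h (by rw [h1]; rfl)
  have := h.2.2.2 ⟨1, le_rfl, le_rfl, by rw [h1]; rfl⟩
  rw [count_segNeg_halfMulti] at this
  omega

theorem IsInitSeqBad.halfMulti_zero (hseq : IsInitSeqBad (halfMulti c 0) Δ l) :
    l = 1 ∧ Δ 1 = segCen := by
  have h1 := hseq.first_eq_segCen
  refine ⟨le_antisymm (hseq.le_of_forall_not_succBad le_rfl fun Λ h => ?_) hseq.one_le, h1⟩
  obtain rfl := eq_segNeg_of_succBad h (by rw [h1]; rfl)
  rcases mem_halfMulti.mp h.1 with ⟨-, h'⟩ | ⟨h', -⟩ | ⟨h', -⟩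
  · exact absurd h' (by decide)
  all_goals exact h' rfl

theorem mHashBad_halfMulti_add_two (h1 : Δ 1 = segPos) (h2 : Δ 2 = segNeg) :
    mHashBad (halfMulti c (n + 2)) Δ 2 = halfMulti c n := by
  have hremoved : ({segPos, segNeg} + Multiset.map Seg.dual {segPos, segNeg} : Multiset Seg)
      = halfMulti 0 2 := by decide
  have hinserted : (Multiset.map Seg.trimEnd {segPos, segNeg} +
      Multiset.map (fun Δ0 => Δ0.trimEnd.dual) {segPos, segNeg}).filter
        (fun Δ0 : Seg => Δ0.1 ≤ Δ0.2) = 0 := by decide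
  rw [mHashBad, seqM_two, h1, h2, hremoved, hinserted, add_zero]
  exact halfMulti_add_sub c n 0 2

theorem mHashBad_halfMulti_one (h1 : Δ 1 = segPos) :
    mHashBad (halfMulti c 1) Δ 1 = halfMulti c 0 := by
  have hremoved : ({segPos} + Multiset.map Seg.dual {segPos} : Multiset Seg)
      = halfMulti 0 1 := by decide
  have hinserted : (Multiset.map Seg.trimEnd {segPos} +
      Multiset.map (fun Δ0 => Δ0.trimEnd.dual) {segPos}).filter
        (fun Δ0 : Seg => Δ0.1 ≤ Δ0.2) = 0 := by decide
  rw [mHashBad, seqM_one, h1, hremoved, hinserted, add_zero]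
  exact halfMulti_add_sub c 0 0 1

theorem mHashBad_halfMulti_zero (h1 : Δ 1 = segCen) :
    mHashBad (halfMulti (c + 2) 0) Δ 1 = halfMulti c 1 := by
  have hremoved : ({segCen} + Multiset.map Seg.dual {segCen} : Multiset Seg)
      = halfMulti 2 0 := by decide
  have hinserted : (Multiset.map Seg.trimEnd {segCen} +
      Multiset.map (fun Δ0 => Δ0.trimEnd.dual) {segCen}).filter
        (fun Δ0 : Seg => Δ0.1 ≤ Δ0.2) = halfMulti 0 1 := by decide
  rw [mHashBad, seqM_one, h1, hremoved, hinserted, halfMulti_add_sub c 0 2 0, halfMulti_add]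
  rfl

theorem mOneBad_pos_neg (h1 : Δ 1 = segPos) (h2 : Δ 2 = segNeg) : mOneBad Δ 2 = halfMulti 2 0 := by
  rw [mOneBad, h1, h2]; decide

theorem mOneBad_pos (h1 : Δ 1 = segPos) : mOneBad Δ 1 = halfMulti 0 1 := by
  rw [mOneBad, h1]; decide

theorem mOneBad_cen (h1 : Δ 1 = segCen) : mOneBad Δ 1 = halfMulti 0 1 := by
  rw [mOneBad, h1]; decide

end halfMulti

namespace IsADBad

variable {c n : ℕ} {d : Multiset Seg}

theorem halfMulti_add_two (h : IsADBad (halfMulti c (n + 2)) d) :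
    ∃ d', IsADBad (halfMulti c n) d' ∧ d = halfMulti 2 0 + d' := by
  obtain ⟨Δ, l, d', hseq, hrec, rfl⟩ := h.exists_of_ne_zero (halfMulti_ne_zero (by omega))
  obtain ⟨rfl, h1, h2⟩ := hseq.halfMulti_add_two
  rw [mHashBad_halfMulti_add_two h1 h2] at hrec
  exact ⟨d', hrec, by rw [mOneBad_pos_neg h1 h2]⟩

theorem halfMulti_one (h : IsADBad (halfMulti c 1) d) :
    ∃ d', IsADBad (halfMulti c 0) d' ∧ d = halfMulti 0 1 + d' := by
  obtain ⟨Δ, l, d', hseq, hrec, rfl⟩ := h.exists_of_ne_zero (halfMulti_ne_zero (by omega))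
  obtain ⟨rfl, h1⟩ := hseq.halfMulti_one
  rw [mHashBad_halfMulti_one h1] at hrec
  exact ⟨d', hrec, by rw [mOneBad_pos h1]⟩

theorem halfMulti_add_two_zero (h : IsADBad (halfMulti (c + 2) 0) d) :
    ∃ d', IsADBad (halfMulti c 1) d' ∧ d = halfMulti 0 1 + d' := by
  obtain ⟨Δ, l, d', hseq, hrec, rfl⟩ := h.exists_of_ne_zero (halfMulti_ne_zero (by omega))
  obtain ⟨rfl, h1⟩ := hseq.halfMulti_zero
  rw [mHashBad_halfMulti_zero h1] at hrec
  exact ⟨d', hrec, by rw [mOneBad_cen h1]⟩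

theorem eq_halfMulti_two_mul_zero (k : ℕ) (h : IsADBad (halfMulti (2 * k) 0) d) :
    d = halfMulti 0 (2 * k) := by
  induction k generalizing d with
  | zero => exact h.eq_zero_of_zero
  | succ k ih =>
    obtain ⟨d₁, h₁, rfl⟩ := halfMulti_add_two_zero h
    obtain ⟨d₀, h₀, rfl⟩ := halfMulti_one h₁
    rw [ih h₀, halfMulti_add, halfMulti_add]
    congr 1
    omega

theorem eq_halfMulti (hc : Even c) (h : IsADBad (halfMulti c n) d) :
    d = halfMulti (2 * (n / 2)) (c + n % 2) := by
  obtain ⟨k, rfl⟩ := hc.two_dvd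
  induction n using Nat.strong_induction_on generalizing d with
  | _ n ih =>
    match n, ih, h with
    | 0, _, h => exact eq_halfMulti_two_mul_zero k h
    | 1, _, h =>
      obtain ⟨d₀, h₀, rfl⟩ := halfMulti_one h
      rw [eq_halfMulti_two_mul_zero k h₀, halfMulti_add]
      congr 1; omega
    | n + 2, ih, h =>
      obtain ⟨d', h', rfl⟩ := halfMulti_add_two h
      rw [ih n (by omega) h', halfMulti_add]
      congr 1 <;> omega

end IsADBad

/-- Proposition 11.2.1: explicit computation of the bad-parity
dual of `𝔪 = c·[−1/2,1/2] + n·([−1/2,−1/2] + [1/2,1/2])`, `c` even. -/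
theorem stmt18 (c n : ℕ) (hc : Even c) (d : Multiset Seg)
    (had : IsADBad
      (Multiset.replicate c (((-1 : ℤ), (1 : ℤ)) : Seg) +
        Multiset.replicate n (((-1 : ℤ), (-1 : ℤ)) : Seg) +
        Multiset.replicate n (((1 : ℤ), (1 : ℤ)) : Seg))
      d) :
    (Even n →
      d = Multiset.replicate n (((-1 : ℤ), (1 : ℤ)) : Seg) +
        Multiset.replicate c (((-1 : ℤ), (-1 : ℤ)) : Seg) +
        Multiset.replicate c (((1 : ℤ), (1 : ℤ)) : Seg)) ∧
    (Odd n →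
      d = Multiset.replicate (n - 1) (((-1 : ℤ), (1 : ℤ)) : Seg) +
        Multiset.replicate (c + 1) (((-1 : ℤ), (-1 : ℤ)) : Seg) +
        Multiset.replicate (c + 1) (((1 : ℤ), (1 : ℤ)) : Seg)) := by
  have hd : d = halfMulti (2 * (n / 2)) (c + n % 2) := IsADBad.eq_halfMulti (n := n) hc had
  refine ⟨fun hn => ?_, fun hn => ?_⟩
  · rw [hd, Nat.two_mul_div_two_of_even hn, Nat.even_iff.mp hn]
    rfl
  · rw [hd, Nat.two_mul_odd_div_two (Nat.odd_iff.mp hn), Nat.odd_iff.mp hn]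
    rfl

end AZ
end

section
/- Work in the bad-parity setting, integer case. Let c₀, c₁, t, n ∈ ℕ with c₀ and c₁ even, and let 𝔪 = c₀·[0,0] + c₁·[−1,1] + t·([−1,0] + [0,1]) + n·([−1,−1] + [1,1]). Then AD(𝔪) = c'₀·[0,0] + c'₁·[−1,1] + t'·([−1,0] + [0,1]) + n'·([−1,−1] + [1,1]), where: (1) if n > c₀: c'₀ = c₁, c'₁ = c₀, t' = t, n' = n − c₀ + c₁; (2) if n ≤ c₀, n even, t even: c'₀ = c₀ − n + c₁, c'₁ = n, t' = t, n' = c₁; (3) if n ≤ c₀, n even, t odd: c'₀ = c₀ − n + c₁ + 2, c'₁ = n, t' = t − 1, n' = c₁ + 1; (4) if n ≤ c₀, n odd, t even: c'₀ = c₀ − n − 1 + c₁, c'₁ = n − 1, t' = t + 1, n' = c₁; (5) if n ≤ c₀, n odd, t odd: c'₀ = c₀ − n + c₁ + 1, c'₁ = n − 1, t' = t, n' = c₁ + 1. -/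
namespace AZ

/-- The multisegment `c₀·[0,0] + c₁·[−1,1] + t·([−1,0] + [0,1]) + n·([−1,−1] + [1,1])`
of Statement 19, in doubled coordinates. -/
def mk19 (c₀ c₁ t n : ℕ) : Multiset Seg :=
  Multiset.replicate c₀ (((0 : ℤ), (0 : ℤ)) : Seg) +
    Multiset.replicate c₁ (((-2 : ℤ), (2 : ℤ)) : Seg) +
    Multiset.replicate t (((-2 : ℤ), (0 : ℤ)) : Seg) +
    Multiset.replicate t (((0 : ℤ), (2 : ℤ)) : Seg) +
    Multiset.replicate n (((-2 : ℤ), (-2 : ℤ)) : Seg) +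
    Multiset.replicate n (((2 : ℤ), (2 : ℤ)) : Seg)

/-!
On `mk19 c₀ c₁ t n` the initial sequence of the bad-parity algorithm is one of eight explicit
sequences of length at most three, according to which of `c₀, c₁, t, n` vanish or are small;
in each case `𝔪₁` is a fixed multisegment and `𝔪#` is again some `mk19 c₀' c₁' t' n'` with
`c₀', c₁'` even and `c₀' + 2c₁' + 3t' + n'` smaller. Since the initial sequence of a
multisegment is unique, `AD` is forced by this recursion, and the closed form `ad19` satisfies it.
-/

theorem Seg.le_antisymm {Δ₁ Δ₂ : Seg} (h₁₂ : Seg.le Δ₁ Δ₂) (h₂₁ : Seg.le Δ₂ Δ₁) : Δ₁ = Δ₂ := by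
  unfold Seg.le at h₁₂ h₂₁
  ext <;> omega

theorem SuccBad.of_eqOn {m : Multiset Seg} {Δ Δ' : ℕ → Seg} {j : ℕ} {x : Seg}
    (hΔ : Set.EqOn Δ Δ' (Set.Icc 1 j)) (hj : 1 ≤ j) (h : SuccBad m Δ j x) :
    SuccBad m Δ' j x := by
  obtain ⟨hmem, hle, hend, hcount⟩ := h
  have hj' : Δ j = Δ' j := hΔ ⟨hj, le_rfl⟩
  refine ⟨hmem, hj' ▸ hle, hj' ▸ hend, fun ⟨i, hi₁, hi₂, hi⟩ => hcount ⟨i, hi₁, hi₂, ?_⟩⟩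
  rw [hi, hΔ ⟨hi₁, hi₂⟩]

namespace IsInitSeqBad

variable {m : Multiset Seg} {Δ Δ' : ℕ → Seg} {l l' : ℕ}

theorem eqOn_of_le (h : IsInitSeqBad m Δ l) (h' : IsInitSeqBad m Δ' l') :
    ∀ k, k ≤ l → k ≤ l' → Set.EqOn Δ Δ' (Set.Icc 1 k)
  | 0, _, _ => fun i ⟨hi₁, hi₂⟩ => absurd (hi₁.trans hi₂) (by omega)
  | k + 1, hk, hk' => by
    have ih := h.eqOn_of_le h' k (by omega) (by omega)
    intro i ⟨hi₁, hi₂⟩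
    obtain hi | rfl : i < k + 1 ∨ i = k + 1 := by omega
    · exact ih ⟨hi₁, by omega⟩
    rcases Nat.eq_zero_or_pos k with rfl | hk₀
    · have hend : (Δ 1).2 = (Δ' 1).2 :=
        le_antisymm (h'.first_max_end _ h.first_mem) (h.first_max_end _ h'.first_mem)
      exact Seg.le_antisymm (h'.first_max _ h.first_mem hend) (h.first_max _ h'.first_mem hend.symm)
    · exact Seg.le_antisymm
        (h'.succ_max k hk₀ (by omega) _ ((h.succ k hk₀ (by omega)).of_eqOn ih hk₀))
        (h.succ_max k hk₀ (by omega) _ ((h'.succ k hk₀ (by omega)).of_eqOn ih.symm hk₀))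

theorem length_eq (h : IsInitSeqBad m Δ l) (h' : IsInitSeqBad m Δ' l') : l = l' := by
  by_contra hne
  rcases Nat.lt_or_gt_of_ne hne with hlt | hlt
  · exact h.last _ ((h'.succ l h.one_le hlt).of_eqOn (h.eqOn_of_le h' l le_rfl hlt.le).symm h.one_le)
  · exact h'.last _ ((h.succ l' h'.one_le hlt).of_eqOn (h.eqOn_of_le h' l' hlt.le le_rfl) h'.one_le)

theorem eqOn (h : IsInitSeqBad m Δ l) (h' : IsInitSeqBad m Δ' l') :
    Set.EqOn Δ Δ' (Set.Icc 1 l) :=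
  h.eqOn_of_le h' l le_rfl (h.length_eq h').le

end IsInitSeqBad

theorem seqM_congr {Δ Δ' : ℕ → Seg} {l : ℕ} (hΔ : Set.EqOn Δ Δ' (Set.Icc 1 l)) :
    seqM Δ l = seqM Δ' l :=
  Multiset.map_congr rfl fun i hi => hΔ (by simpa using hi)

theorem mOneBad_congr {Δ Δ' : ℕ → Seg} {l : ℕ} (hl : 1 ≤ l) (hΔ : Set.EqOn Δ Δ' (Set.Icc 1 l)) :
    mOneBad Δ l = mOneBad Δ' l := by
  rw [mOneBad, mOneBad, hΔ ⟨le_rfl, hl⟩, hΔ ⟨hl, le_rfl⟩]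

def IsADStep (m m₁ m' : Multiset Seg) : Prop :=
  ∃ Δ l, IsInitSeqBad m Δ l ∧ mOneBad Δ l = m₁ ∧ mHashBad m Δ l = m'

theorem IsADBad.exists_of_isADStep {m m₁ m' d : Multiset Seg} (had : IsADBad m d)
    (hstep : IsADStep m m₁ m') : ∃ d', IsADBad m' d' ∧ d = m₁ + d' := by
  obtain ⟨Δ, l, hinit, rfl, rfl⟩ := hstep
  cases had with
  | zero => exact absurd hinit.first_mem (Multiset.notMem_zero _)
  | step _ hinit' hrec =>
    obtain rfl := hinit'.length_eq hinit
    have hΔ := hinit'.eqOn hinit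
    refine ⟨_, ?_, by rw [mOneBad_congr hinit.one_le hΔ]⟩
    rwa [mHashBad, seqM_congr hΔ] at hrec

theorem IsADBad.eq_zero {d : Multiset Seg} (had : IsADBad 0 d) : d = 0 := by
  cases had with
  | zero => rfl
  | step hm => exact absurd rfl hm

-- Indexed from `1`, like `Δ₁, …, Δ_l`.
def seqOfList (L : List Seg) (i : ℕ) : Seg := L.getD (i - 1) 0

theorem seqM_seqOfList (L : List Seg) : seqM (seqOfList L) L.length = L := by
  rw [seqM, Nat.Icc_eq_range', Nat.add_sub_cancel]
  simp only [Multiset.map_coe, Multiset.coe_eq_coe]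
  refine List.Perm.of_eq (List.ext_getElem (by simp) fun i _ hi => ?_)
  simp [seqOfList, List.getElem_range', hi]

theorem IsADStep.of_list {m m₁ m' : Multiset Seg} (L : List Seg) (removed inserted : Multiset Seg)
    (hinit : IsInitSeqBad m (seqOfList L) L.length)
    (hone : mOneBad (seqOfList L) L.length = m₁)
    (hremoved : (L : Multiset Seg) + (L : Multiset Seg).map Seg.dual = removed)
    (hinserted : ((L : Multiset Seg).map Seg.trimEnd +
        (L : Multiset Seg).map (fun Δ0 => Seg.dual (Seg.trimEnd Δ0))).filter
          (fun Δ0 => Δ0.1 ≤ Δ0.2) = inserted)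
    (hm' : m - removed + inserted = m') :
    IsADStep m m₁ m' :=
  ⟨_, _, hinit, hone, by rw [mHashBad, seqM_seqOfList, hremoved, hinserted, hm']⟩

section mk19

variable {c₀ c₁ t n : ℕ}

theorem count_mk19 (x : Seg) :
    (mk19 c₀ c₁ t n).count x =
      (if x = (0, 0) then c₀ else 0) + (if x = (-2, 2) then c₁ else 0) +
      (if x = (-2, 0) then t else 0) + (if x = (0, 2) then t else 0) +
      (if x = (-2, -2) then n else 0) + (if x = (2, 2) then n else 0) := by
  simp [mk19, Multiset.count_replicate, eq_comm]

theorem mem_mk19 {x : Seg} :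
    x ∈ mk19 c₀ c₁ t n ↔
      (c₀ ≠ 0 ∧ x = (0, 0)) ∨ (c₁ ≠ 0 ∧ x = (-2, 2)) ∨ (t ≠ 0 ∧ x = (-2, 0)) ∨
      (t ≠ 0 ∧ x = (0, 2)) ∨ (n ≠ 0 ∧ x = (-2, -2)) ∨ (n ≠ 0 ∧ x = (2, 2)) := by
  simp [mk19, Multiset.mem_replicate]
  tauto

theorem forall_mem_mk19 {P : Seg → Prop} :
    (∀ x ∈ mk19 c₀ c₁ t n, P x) ↔
      (c₀ ≠ 0 → P (0, 0)) ∧ (c₁ ≠ 0 → P (-2, 2)) ∧ (t ≠ 0 → P (-2, 0)) ∧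
      (t ≠ 0 → P (0, 2)) ∧ (n ≠ 0 → P (-2, -2)) ∧ (n ≠ 0 → P (2, 2)) := by
  simp only [mem_mk19, or_imp, forall_and, and_imp, forall_eq_apply_imp_iff]

theorem mk19_add (c₀' c₁' t' n' : ℕ) :
    mk19 c₀ c₁ t n + mk19 c₀' c₁' t' n' = mk19 (c₀ + c₀') (c₁ + c₁') (t + t') (n + n') := by
  ext x
  simp only [Multiset.count_add, count_mk19]
  split_ifs <;> omega

theorem mk19_sub (c₀' c₁' t' n' : ℕ) :
    mk19 c₀ c₁ t n - mk19 c₀' c₁' t' n' = mk19 (c₀ - c₀') (c₁ - c₁') (t - t') (n - n') := by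
  ext x
  simp only [Multiset.count_sub, count_mk19]
  split_ifs <;> simp_all

end mk19

-- Rewriting the bounded quantifier of `SuccBad` over a `Finset` lets `decide` evaluate it.
theorem exists_one_le_le_iff_exists_mem_Icc {P : ℕ → Prop} {j : ℕ} :
    (∃ i, 1 ≤ i ∧ i ≤ j ∧ P i) ↔ ∃ i ∈ Finset.Icc 1 j, P i := by
  simp [and_assoc]

section steps

variable {c₀ c₁ t n : ℕ}

theorem isADStep_mk19_of_two_le_c₀_of_two_le_n (hc₀ : 2 ≤ c₀) (hn : 2 ≤ n) :
    IsADStep (mk19 c₀ c₁ t n) (mk19 0 2 0 0) (mk19 (c₀ - 2) c₁ t (n - 2)) := by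
  refine .of_list [(2, 2), (0, 0), (-2, -2)] (mk19 2 0 0 2) (mk19 0 0 0 0) ?_ (by decide)
    (by decide) (by decide) (by simp [mk19_sub, mk19_add])
  simp only [List.length_cons, List.length_nil, Nat.reduceAdd]
  refine ⟨by norm_num, ?_, ?_, ?_, fun j hj hjl => ?_, fun j hj hjl => ?_, ?_⟩
  all_goals try interval_cases j
  all_goals try simp only [SuccBad, not_and, and_imp, forall_mem_mk19,
    exists_one_le_le_iff_exists_mem_Icc]
  all_goals simp +decide [mem_mk19, count_mk19, Seg.le, seqOfList]
  all_goals omega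

theorem isADStep_mk19_n_one_of_two_le_c₀ (hc₀ : 2 ≤ c₀) :
    IsADStep (mk19 c₀ c₁ t 1) (mk19 0 0 1 0) (mk19 (c₀ - 2) c₁ t 0) := by
  refine .of_list [(2, 2), (0, 0)] (mk19 2 0 0 1) (mk19 0 0 0 0) ?_ (by decide)
    (by decide) (by decide) (by simp [mk19_sub, mk19_add])
  simp only [List.length_cons, List.length_nil, Nat.reduceAdd]
  refine ⟨by norm_num, ?_, ?_, ?_, fun j hj hjl => ?_, fun j hj hjl => ?_, ?_⟩
  all_goals try interval_cases j
  all_goals try simp only [SuccBad, not_and, and_imp, forall_mem_mk19,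
    exists_one_le_le_iff_exists_mem_Icc]
  all_goals simp +decide [mem_mk19, count_mk19, Seg.le, seqOfList]
  all_goals omega

theorem isADStep_mk19_c₀_zero_of_pos_t_of_pos_n (ht : 1 ≤ t) (hn : 1 ≤ n) :
    IsADStep (mk19 0 c₁ t n) (mk19 0 0 1 0) (mk19 0 c₁ (t - 1) n) := by
  refine .of_list [(2, 2), (-2, 0)] (mk19 0 0 1 1) (mk19 0 0 0 1) ?_ (by decide)
    (by decide) (by decide) (by simp [mk19_sub, mk19_add, Nat.sub_add_cancel hn])
  simp only [List.length_cons, List.length_nil, Nat.reduceAdd]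
  refine ⟨by norm_num, ?_, ?_, ?_, fun j hj hjl => ?_, fun j hj hjl => ?_, ?_⟩
  all_goals try interval_cases j
  all_goals try simp only [SuccBad, not_and, and_imp, forall_mem_mk19,
    exists_one_le_le_iff_exists_mem_Icc]
  all_goals simp +decide [mem_mk19, count_mk19, Seg.le, seqOfList]
  all_goals omega

theorem isADStep_mk19_c₀_t_zero_of_pos_n (hn : 1 ≤ n) :
    IsADStep (mk19 0 c₁ 0 n) (mk19 0 0 0 1) (mk19 0 c₁ 0 (n - 1)) := by
  refine .of_list [(2, 2)] (mk19 0 0 0 1) (mk19 0 0 0 0) ?_ (by decide)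
    (by decide) (by decide) (by simp [mk19_sub, mk19_add])
  simp only [List.length_cons, List.length_nil, Nat.reduceAdd]
  refine ⟨by norm_num, ?_, ?_, ?_, fun j hj hjl => ?_, fun j hj hjl => ?_, ?_⟩
  all_goals try interval_cases j
  all_goals try simp only [SuccBad, not_and, forall_mem_mk19,
    exists_one_le_le_iff_exists_mem_Icc]
  all_goals simp +decide [mem_mk19, count_mk19, Seg.le, seqOfList]
  all_goals omega

theorem isADStep_mk19_n_zero_of_two_le_t (ht : 2 ≤ t) :
    IsADStep (mk19 c₀ c₁ t 0) (mk19 0 0 1 0) (mk19 (c₀ + 2) c₁ (t - 2) 1) := by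
  refine .of_list [(0, 2), (-2, 0)] (mk19 0 0 2 0) (mk19 2 0 0 1) ?_ (by decide)
    (by decide) (by decide) (by simp [mk19_sub, mk19_add])
  simp only [List.length_cons, List.length_nil, Nat.reduceAdd]
  refine ⟨by norm_num, ?_, ?_, ?_, fun j hj hjl => ?_, fun j hj hjl => ?_, ?_⟩
  all_goals try interval_cases j
  all_goals try simp only [SuccBad, not_and, and_imp, forall_mem_mk19,
    exists_one_le_le_iff_exists_mem_Icc]
  all_goals simp +decide [mem_mk19, count_mk19, Seg.le, seqOfList]
  all_goals omega

theorem isADStep_mk19_t_one_n_zero :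
    IsADStep (mk19 c₀ c₁ 1 0) (mk19 0 0 0 1) (mk19 (c₀ + 2) c₁ 0 0) := by
  refine .of_list [(0, 2)] (mk19 0 0 1 0) (mk19 2 0 0 0) ?_ (by decide)
    (by decide) (by decide) (by simp [mk19_sub, mk19_add])
  simp only [List.length_cons, List.length_nil, Nat.reduceAdd]
  refine ⟨by norm_num, ?_, ?_, ?_, fun j hj hjl => ?_, fun j hj hjl => ?_, ?_⟩
  all_goals try interval_cases j
  all_goals try simp only [SuccBad, not_and, forall_mem_mk19,
    exists_one_le_le_iff_exists_mem_Icc]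
  all_goals simp +decide [mem_mk19, count_mk19, Seg.le, seqOfList]

theorem isADStep_mk19_t_n_zero_of_pos_c₁ (hc₁ : 1 ≤ c₁) :
    IsADStep (mk19 c₀ c₁ 0 0) (mk19 0 0 0 1) (mk19 c₀ (c₁ - 2) 1 0) := by
  refine .of_list [(-2, 2)] (mk19 0 2 0 0) (mk19 0 0 1 0) ?_ (by decide)
    (by decide) (by decide) (by simp [mk19_sub, mk19_add])
  simp only [List.length_cons, List.length_nil, Nat.reduceAdd]
  refine ⟨by norm_num, ?_, ?_, ?_, fun j hj hjl => ?_, fun j hj hjl => ?_, ?_⟩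
  all_goals try interval_cases j
  all_goals try simp only [SuccBad, not_and, forall_mem_mk19,
    exists_one_le_le_iff_exists_mem_Icc]
  all_goals simp +decide [mem_mk19, count_mk19, Seg.le, seqOfList]
  all_goals omega

theorem isADStep_mk19_c₁_t_n_zero_of_pos_c₀ (hc₀ : 1 ≤ c₀) :
    IsADStep (mk19 c₀ 0 0 0) (mk19 2 0 0 0) (mk19 (c₀ - 2) 0 0 0) := by
  refine .of_list [(0, 0)] (mk19 2 0 0 0) (mk19 0 0 0 0) ?_ (by decide)
    (by decide) (by decide) (by simp [mk19_sub, mk19_add])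
  simp only [List.length_cons, List.length_nil, Nat.reduceAdd]
  refine ⟨by norm_num, ?_, ?_, ?_, fun j hj hjl => ?_, fun j hj hjl => ?_, ?_⟩
  all_goals try interval_cases j
  all_goals try simp only [SuccBad, not_and, forall_mem_mk19,
    exists_one_le_le_iff_exists_mem_Icc]
  all_goals simp +decide [mem_mk19, count_mk19, Seg.le, seqOfList]
  all_goals omega

end steps

def ad19 (c₀ c₁ t n : ℕ) : Multiset Seg :=
  if c₀ < n then mk19 c₁ c₀ t (n - c₀ + c₁)
  else if n % 2 = 0 then
    if t % 2 = 0 then mk19 (c₀ - n + c₁) n t c₁ else mk19 (c₀ - n + c₁ + 2) n (t - 1) (c₁ + 1)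
  else
    if t % 2 = 0 then mk19 (c₀ - n - 1 + c₁) (n - 1) (t + 1) c₁
    else mk19 (c₀ - n + c₁ + 1) (n - 1) t (c₁ + 1)

theorem exists_isADStep_mk19 {c₀ c₁ t n : ℕ} (h₀ : Even c₀) (h₁ : Even c₁)
    (hne : ¬(c₀ = 0 ∧ c₁ = 0 ∧ t = 0 ∧ n = 0)) :
    ∃ c₀' c₁' t' n' m₁, IsADStep (mk19 c₀ c₁ t n) m₁ (mk19 c₀' c₁' t' n') ∧
      Even c₀' ∧ Even c₁' ∧ c₀' + 2 * c₁' + 3 * t' + n' < c₀ + 2 * c₁ + 3 * t + n ∧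
      ad19 c₀ c₁ t n = m₁ + ad19 c₀' c₁' t' n' := by
  rw [Nat.even_iff] at h₀ h₁
  have hcases : (2 ≤ c₀ ∧ 2 ≤ n) ∨ (2 ≤ c₀ ∧ n = 1) ∨ (c₀ = 0 ∧ 1 ≤ t ∧ 1 ≤ n) ∨
      (c₀ = 0 ∧ t = 0 ∧ 1 ≤ n) ∨ (n = 0 ∧ 2 ≤ t) ∨ (n = 0 ∧ t = 1) ∨
      (n = 0 ∧ t = 0 ∧ 1 ≤ c₁) ∨ (n = 0 ∧ t = 0 ∧ c₁ = 0 ∧ 1 ≤ c₀) := by omega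
  rcases hcases with ⟨hc₀, hn⟩ | ⟨hc₀, rfl⟩ | ⟨rfl, ht, hn⟩ | ⟨rfl, rfl, hn⟩ | ⟨rfl, ht⟩ |
      ⟨rfl, rfl⟩ | ⟨rfl, rfl, hc₁⟩ | ⟨rfl, rfl, rfl, hc₀⟩
    <;> [refine ⟨_, _, _, _, _, isADStep_mk19_of_two_le_c₀_of_two_le_n hc₀ hn, ?_⟩;
      refine ⟨_, _, _, _, _, isADStep_mk19_n_one_of_two_le_c₀ hc₀, ?_⟩;
      refine ⟨_, _, _, _, _, isADStep_mk19_c₀_zero_of_pos_t_of_pos_n ht hn, ?_⟩;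
      refine ⟨_, _, _, _, _, isADStep_mk19_c₀_t_zero_of_pos_n hn, ?_⟩;
      refine ⟨_, _, _, _, _, isADStep_mk19_n_zero_of_two_le_t ht, ?_⟩;
      refine ⟨_, _, _, _, _, isADStep_mk19_t_one_n_zero, ?_⟩;
      refine ⟨_, _, _, _, _, isADStep_mk19_t_n_zero_of_pos_c₁ hc₁, ?_⟩;
      refine ⟨_, _, _, _, _, isADStep_mk19_c₁_t_n_zero_of_pos_c₀ hc₀, ?_⟩]
  all_goals
    refine ⟨Nat.even_iff.2 (by omega), Nat.even_iff.2 (by omega), by omega, ?_⟩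
    unfold ad19
    split_ifs <;> (try contradiction) <;> rw [mk19_add] <;> congr! 1 <;> omega

theorem eq_ad19_of_isADBad {c₀ c₁ t n : ℕ} {d : Multiset Seg} (h₀ : Even c₀) (h₁ : Even c₁)
    (had : IsADBad (mk19 c₀ c₁ t n) d) : d = ad19 c₀ c₁ t n := by
  induction hN : c₀ + 2 * c₁ + 3 * t + n using Nat.strong_induction_on
    generalizing c₀ c₁ t n d with
  | _ N ih =>
  by_cases hzero : c₀ = 0 ∧ c₁ = 0 ∧ t = 0 ∧ n = 0
  · obtain ⟨rfl, rfl, rfl, rfl⟩ := hzero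
    exact (IsADBad.eq_zero (by simpa [mk19] using had)).trans (by simp [ad19, mk19])
  · obtain ⟨c₀', c₁', t', n', m₁, hstep, h₀', h₁', hlt, hrec⟩ := exists_isADStep_mk19 h₀ h₁ hzero
    obtain ⟨d', hd', rfl⟩ := had.exists_of_isADStep hstep
    rw [hrec, ih _ (hN ▸ hlt) h₀' h₁' hd' rfl]

/-- Proposition 11.2.3: explicit computation of the bad-parity
dual of `𝔪 = c₀·[0,0] + c₁·[−1,1] + t·([−1,0] + [0,1]) + n·([−1,−1] + [1,1])`,
with `c₀`, `c₁` even. -/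
theorem stmt19 (c₀ c₁ t n : ℕ) (h0 : Even c₀) (h1 : Even c₁)
    (d : Multiset Seg) (had : IsADBad (mk19 c₀ c₁ t n) d) :
    (c₀ < n → d = mk19 c₁ c₀ t (n - c₀ + c₁)) ∧
    (n ≤ c₀ → Even n → Even t → d = mk19 (c₀ - n + c₁) n t c₁) ∧
    (n ≤ c₀ → Even n → Odd t → d = mk19 (c₀ - n + c₁ + 2) n (t - 1) (c₁ + 1)) ∧
    (n ≤ c₀ → Odd n → Even t → d = mk19 (c₀ - n - 1 + c₁) (n - 1) (t + 1) c₁) ∧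
    (n ≤ c₀ → Odd n → Odd t → d = mk19 (c₀ - n + c₁ + 1) (n - 1) t (c₁ + 1)) := by
  rw [eq_ad19_of_isADBad h0 h1 had, ad19]
  refine ⟨fun h => if_pos h, fun h hn ht => ?_, fun h hn ht => ?_, fun h hn ht => ?_,
    fun h hn ht => ?_⟩ <;>
  · simp only [Nat.even_iff, Nat.odd_iff] at hn ht
    simp [not_lt.2 h, hn, ht]

end AZ
end
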